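/- arXiv:1007.3949 — 3 statements merged into one kernel-verified Lean document; each statement's English description precedes it below -/
import Mathlib

section
/- If G is a simple graph on n vertices and 1 ≤ k ≤ n, then the sum of the k largest singular values of the adjacency matrix of G is at most (1/2)(1 + √k)·n. -/
/-!
Let σ = σ(A) be the singular values of the adjacency matrix A, μ the largest one and
T = ∑ σᵢ² = tr(A²) = ∑ᵢⱼ Aᵢⱼ. Of any k singular values, one is at most μ and, by Cauchy–Schwarz,
the other k - 1 sum to at most √((k - 1)(T - μ²)). Testing A Aᵀ against the all-ones vector gives
T² ≤ μ² n², so T ≤ μ n, and μ + √((k - 1)(μ n - μ²)) ≤ (1 + √k) n / 2 is Cauchy–Schwarz once more.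
-/
open Matrix BigOperators

noncomputable def singularValues {α β : Type*} [Fintype α] [Fintype β] [DecidableEq α]
    (A : Matrix α β ℝ) : α → ℝ :=
  fun i => Real.sqrt ((Matrix.isHermitian_mul_conjTranspose_self A).eigenvalues i)

/-- The Ky Fan `k`-norm: the sum of the `k` largest singular values, expressed as the
largest sum of singular values over index sets of size `k`. -/
noncomputable def kyFan {α β : Type*} [Fintype α] [Fintype β] [DecidableEq α]
    (k : ℕ) (A : Matrix α β ℝ) : ℝ :=
  sSup ((fun s : Finset α => ∑ i ∈ s, singularValues A i) '' {s | s.card = k})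

lemma adj_isHermitian {n : ℕ} (G : SimpleGraph (Fin n)) [DecidableRel G.Adj] :
    (G.adjMatrix ℝ).IsHermitian := by
  unfold Matrix.IsHermitian
  rw [Matrix.conjTranspose_eq_transpose_of_trivial]
  exact G.isSymm_adjMatrix

open Finset

open scoped MatrixOrder in
theorem Matrix.IsHermitian.dotProduct_mulVec_le {m : Type*} [Fintype m] [DecidableEq m]
    {B : Matrix m m ℝ} (hB : B.IsHermitian) {c : ℝ} (hc : ∀ i, hB.eigenvalues i ≤ c)
    (x : m → ℝ) : x ⬝ᵥ B *ᵥ x ≤ c * (x ⬝ᵥ x) := by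
  have hle : B ≤ algebraMap ℝ _ c := le_algebraMap_of_spectrum_le fun r hr => by
    obtain ⟨i, rfl⟩ := hB.spectrum_real_eq_range_eigenvalues ▸ hr
    exact hc i
  have := (Matrix.le_iff.mp hle).dotProduct_mulVec_nonneg x
  simp only [star_trivial, Matrix.sub_mulVec, dotProduct_sub, Algebra.algebraMap_eq_smul_one,
    Matrix.smul_mulVec, Matrix.one_mulVec, dotProduct_smul, smul_eq_mul] at this
  linarith

theorem Finset.sum_le_add_sqrt_of_forall_le {ι : Type*} [Fintype ι] [DecidableEq ι]
    {σ : ι → ℝ} {i₀ : ι} (hi₀ : ∀ i, σ i ≤ σ i₀) {s : Finset ι}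
    (hs : s.Nonempty) :
    ∑ i ∈ s, σ i ≤ σ i₀ + √((#s - 1) * (∑ i, σ i ^ 2 - σ i₀ ^ 2)) := by
  obtain ⟨j, hj, hsub⟩ : ∃ j ∈ s, s.erase j ⊆ univ.erase i₀ := by
    by_cases h : i₀ ∈ s
    · exact ⟨i₀, h, erase_subset_erase _ (subset_univ s)⟩
    · obtain ⟨j, hj⟩ := hs
      exact ⟨j, hj, fun i hi => mem_erase.2 ⟨ne_of_mem_of_not_mem (mem_of_mem_erase hi) h,
        mem_univ i⟩⟩
  have hrest : (∑ i ∈ s.erase j, σ i) ^ 2 ≤ (#s - 1) * (∑ i, σ i ^ 2 - σ i₀ ^ 2) :=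
    calc (∑ i ∈ s.erase j, σ i) ^ 2 ≤ #(s.erase j) * ∑ i ∈ s.erase j, σ i ^ 2 :=
          sq_sum_le_card_mul_sum_sq
      _ ≤ (#s - 1) * ∑ i ∈ univ.erase i₀, σ i ^ 2 := by
          rw [card_erase_of_mem hj, Nat.cast_pred hs.card_pos]
          gcongr
          exact sub_nonneg.2 (by exact_mod_cast hs.card_pos)
      _ = (#s - 1) * (∑ i, σ i ^ 2 - σ i₀ ^ 2) := by
          rw [← sum_erase_add univ _ (mem_univ i₀), add_sub_cancel_right]
  rw [← add_sum_erase s σ hj]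
  exact add_le_add (hi₀ j) ((le_abs_self _).trans (Real.abs_le_sqrt hrest))

theorem add_sqrt_mul_sub_sq_le {k μ T n : ℝ} (hk : 1 ≤ k) (hn : 0 ≤ n) (hμ : 0 ≤ μ)
    (hμT : μ ^ 2 ≤ T) (hTn : T ≤ μ * n) :
    μ + √((k - 1) * (T - μ ^ 2)) ≤ 1 / 2 * (1 + √k) * n := by
  set v := √((k - 1) * (T - μ ^ 2))
  have hv : v ^ 2 ≤ (k - 1) * (μ * (n - μ)) := by
    rw [Real.sq_sqrt (by nlinarith)]; nlinarith
  have hμn : 0 ≤ μ * (n - μ) := by nlinarith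
  -- Cauchy–Schwarz for (1, √(k - 1)) and (μ - n/2, √(μ (n - μ))), the latter of norm n/2
  have hCS : (μ - n / 2 + v) ^ 2 ≤ (√k * n / 2) ^ 2 := by
    rw [div_pow, mul_pow, Real.sq_sqrt (by linarith)]
    rcases hk.eq_or_lt with rfl | hk1
    · have hv0 : v = 0 := by nlinarith
      nlinarith
    · have hid : (k - 1) * (k * n ^ 2 / 4 - (μ - n / 2 + v) ^ 2)
          = k * ((k - 1) * (μ * (n - μ)) - v ^ 2) + ((k - 1) * (μ - n / 2) - v) ^ 2 := by ring
      nlinarith [sq_nonneg ((k - 1) * (μ - n / 2) - v)]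
  linarith [le_of_sq_le_sq hCS (by positivity)]

section singularValues

variable {m m' : Type*} [Fintype m] [Fintype m'] [DecidableEq m]

theorem singularValues_nonneg (A : Matrix m m' ℝ) (i : m) : 0 ≤ singularValues A i :=
  Real.sqrt_nonneg _

theorem singularValues_sq (A : Matrix m m' ℝ) (i : m) :
    singularValues A i ^ 2 = (isHermitian_mul_conjTranspose_self A).eigenvalues i :=
  Real.sq_sqrt (eigenvalues_self_mul_conjTranspose_nonneg A i)

theorem sum_singularValues_sq (A : Matrix m m' ℝ) :
    ∑ i, singularValues A i ^ 2 = ∑ i, ∑ j, A i j ^ 2 := by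
  have htrace := (isHermitian_mul_conjTranspose_self A).trace_eq_sum_eigenvalues
  simp only [RCLike.ofReal_real_eq_id, id] at htrace
  simp_rw [singularValues_sq, ← htrace]
  simp [trace, mul_apply, sq]

theorem sq_sum_apply_le_singularValues_sq_mul (A : Matrix m m' ℝ) {i₀ : m}
    (hi₀ : ∀ i, singularValues A i ≤ singularValues A i₀) :
    (∑ i, ∑ j, A i j) ^ 2 ≤ singularValues A i₀ ^ 2 * (Fintype.card m * Fintype.card m') := by
  set w := Aᵀ *ᵥ 1
  have hsum : ∑ i, ∑ j, A i j = ∑ j, w j := by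
    simp only [w, mulVec, dotProduct, transpose_apply, Pi.one_apply, mul_one]
    exact sum_comm
  have hww : (1 : m → ℝ) ⬝ᵥ (A * Aᴴ) *ᵥ 1 = w ⬝ᵥ w := by
    rw [← mulVec_mulVec, dotProduct_mulVec (1 : m → ℝ) A, conjTranspose_eq_transpose_of_trivial,
      ← mulVec_transpose]
  have hrayleigh := (isHermitian_mul_conjTranspose_self A).dotProduct_mulVec_le
    (fun i => singularValues_sq A i ▸ singularValues_sq A i₀ ▸
      pow_le_pow_left₀ (singularValues_nonneg A i) (hi₀ i) 2) (1 : m → ℝ)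
  have hCS : (∑ j, w j) ^ 2 ≤ Fintype.card m' * (w ⬝ᵥ w) := by
    simpa [dotProduct, sq] using sq_sum_le_card_mul_sum_sq (s := univ) (f := w)
  simp only [hww, ← singularValues_sq, dotProduct_one, Pi.one_apply, sum_const, card_univ,
    nsmul_eq_mul, mul_one] at hrayleigh
  rw [hsum]
  nlinarith [mul_le_mul_of_nonneg_left hrayleigh (Nat.cast_nonneg (α := ℝ) (Fintype.card m'))]

end singularValues

theorem SimpleGraph.sum_singularValues_sq_adjMatrix_le {V : Type*} [Fintype V] [DecidableEq V]
    (G : SimpleGraph V) [DecidableRel G.Adj] {i₀ : V}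
    (hi₀ : ∀ i, singularValues (G.adjMatrix ℝ) i ≤ singularValues (G.adjMatrix ℝ) i₀) :
    ∑ i, singularValues (G.adjMatrix ℝ) i ^ 2 ≤
      singularValues (G.adjMatrix ℝ) i₀ * Fintype.card V := by
  set A := G.adjMatrix ℝ
  have hentry (i j : V) : A i j ^ 2 = A i j := by by_cases h : G.Adj i j <;> simp [A, h]
  have hT : ∑ i, singularValues A i ^ 2 = ∑ i, ∑ j, A i j := by
    simp only [sum_singularValues_sq, hentry]
  rw [hT]
  refine le_of_sq_le_sq ?_ (mul_nonneg (singularValues_nonneg A i₀) (Nat.cast_nonneg _))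
  rw [mul_pow, sq (Fintype.card V : ℝ)]
  exact sq_sum_apply_le_singularValues_sq_mul A hi₀

theorem kyFan_graph_le_general (n k : ℕ)
    (G : SimpleGraph (Fin n)) [DecidableRel G.Adj] :
    kyFan k (G.adjMatrix ℝ) ≤ (1 / 2) * (1 + Real.sqrt k) * n := by
  refine Real.sSup_le ?_ (by positivity)
  rintro _ ⟨s, rfl, rfl⟩
  rcases s.eq_empty_or_nonempty with rfl | hs
  · simp
  set σ := singularValues (G.adjMatrix ℝ)
  obtain ⟨i₀, -, hi₀⟩ := univ.exists_max_image σ (hs.mono (subset_univ s))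
  calc ∑ i ∈ s, σ i ≤ σ i₀ + √((#s - 1) * (∑ i, σ i ^ 2 - σ i₀ ^ 2)) :=
        sum_le_add_sqrt_of_forall_le (fun i => hi₀ i (mem_univ i)) hs
    _ ≤ 1 / 2 * (1 + √(#s : ℕ)) * n := by
        refine add_sqrt_mul_sub_sq_le (by exact_mod_cast hs.card_pos) n.cast_nonneg
          (singularValues_nonneg _ _) ?_ ?_
        · exact single_le_sum (fun i _ => sq_nonneg (σ i)) (mem_univ i₀)
        · simpa using G.sum_singularValues_sq_adjMatrix_le fun i => hi₀ i (mem_univ i)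

theorem kyFan_graph_le (n k : ℕ) (hk1 : 1 ≤ k) (hkn : k ≤ n)
    (G : SimpleGraph (Fin n)) [DecidableRel G.Adj] :
    kyFan k (G.adjMatrix ℝ) ≤ (1 / 2) * (1 + Real.sqrt k) * n :=
  kyFan_graph_le_general n k G
end

section
/- If G is a simple graph on k vertices, then the energy of G (the sum of the absolute values of all eigenvalues of its adjacency matrix) is at most (1/2)(1 + √k)·k. -/
open Matrix BigOperators

/-! Let `t` be the largest eigenvalue of `A` and `𝟙` the all-ones vector. Then
`∑ λᵢ² = tr A² = 𝟙ᵀ A 𝟙 ≤ k t` by the Rayleigh bound, and `t² ≤ ∑ λᵢ²`. By Cauchy–Schwarz the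
other `k - 1` eigenvalues contribute at most `√((k - 1)(∑ λᵢ² - t²)) ≤ √((k - 1)(k t - t²))`, and
`t + √((k - 1)(k t - t²)) ≤ k (1 + √k) / 2` for every real `t`. -/

lemma abs_add_sqrt_le_of_sq_le_le_mul {t S k : ℝ} (hk : 1 ≤ k) (htS : t ^ 2 ≤ S)
    (hSk : S ≤ k * t) :
    |t| + √((k - 1) * (S - t ^ 2)) ≤ 1 / 2 * (1 + √k) * k := by
  set c := 1 / 2 * (1 + √k) * k with hc
  have hsqrt : √k ^ 2 = k := Real.sq_sqrt (by linarith)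
  have hk_sqrt : 1 ≤ √k := Real.one_le_sqrt.mpr hk
  have ht : 0 ≤ t := by nlinarith
  rw [abs_of_nonneg ht]
  have htk : t ≤ k := by nlinarith
  have hkc : k ≤ c := by
    have : 0 ≤ k * (√k - 1) := mul_nonneg (by linarith) (by linarith)
    linarith
  have htc : t ≤ c := htk.trans hkc
  -- `(k - 1) (k t - t²) = (c - t)² - (√k t - c)²`, because `2 c (√k - 1) = k (k - 1)`.
  have hkey : (k - 1) * (S - t ^ 2) ≤ (c - t) ^ 2 := by
    have hcs : 2 * c * (√k - 1) = k * (k - 1) := by rw [hc]; linear_combination k * hsqrt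
    nlinarith [sq_nonneg (√k * t - c)]
  linarith [Real.sqrt_le_iff.mpr ⟨sub_nonneg.mpr htc, hkey⟩]

lemma sum_abs_le_abs_add_sqrt {ι : Type*} [Fintype ι] [DecidableEq ι] (μ : ι → ℝ) (i₀ : ι) :
    ∑ i, |μ i| ≤ |μ i₀| + √((Fintype.card ι - 1) * (∑ i, μ i ^ 2 - μ i₀ ^ 2)) := by
  rw [← Finset.add_sum_erase _ _ (Finset.mem_univ i₀)]
  gcongr
  apply Real.le_sqrt_of_sq_le
  calc (∑ i ∈ Finset.univ.erase i₀, |μ i|) ^ 2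
      ≤ (Finset.univ.erase i₀).card * ∑ i ∈ Finset.univ.erase i₀, |μ i| ^ 2 :=
        sq_sum_le_card_mul_sum_sq
    _ = (Fintype.card ι - 1) * (∑ i, μ i ^ 2 - μ i₀ ^ 2) := by
        simp only [sq_abs, Finset.sum_erase_eq_sub (Finset.mem_univ i₀),
          Finset.card_erase_of_mem (Finset.mem_univ i₀), Finset.card_univ,
          Nat.cast_pred (Fintype.card_pos_iff.mpr ⟨i₀⟩)]

theorem sum_abs_le_of_sum_sq_le_card_mul {ι : Type*} [Fintype ι] (μ : ι → ℝ) (i₀ : ι)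
    (h : ∑ i, μ i ^ 2 ≤ Fintype.card ι * μ i₀) :
    ∑ i, |μ i| ≤ 1 / 2 * (1 + √(Fintype.card ι)) * Fintype.card ι := by
  classical
  exact (sum_abs_le_abs_add_sqrt μ i₀).trans <| abs_add_sqrt_le_of_sq_le_le_mul
    (by exact_mod_cast Fintype.card_pos_iff.mpr ⟨i₀⟩)
    (Finset.single_le_sum (fun i _ ↦ sq_nonneg (μ i)) (Finset.mem_univ i₀)) h

namespace Matrix

variable {n : Type*} [Fintype n]

theorem dotProduct_mul_mul_transpose_mulVec {R : Type*} [CommSemiring R] (U M : Matrix n n R)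
    (x : n → R) : x ⬝ᵥ (U * M * Uᵀ) *ᵥ x = (Uᵀ *ᵥ x) ⬝ᵥ M *ᵥ (Uᵀ *ᵥ x) := by
  rw [← mulVec_mulVec, ← mulVec_mulVec, dotProduct_mulVec, mulVec_transpose]

variable [DecidableEq n]

theorem IsHermitian.trace_mul_self {𝕜 : Type*} [RCLike 𝕜] {A : Matrix n n 𝕜}
    (hA : A.IsHermitian) : (A * A).trace = ∑ i, (hA.eigenvalues i : 𝕜) ^ 2 := by
  conv_lhs => rw [hA.spectral_theorem, ← map_mul, Unitary.conjStarAlgAut_apply, trace_mul_cycle,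
    Unitary.coe_star_mul_self, one_mul, diagonal_mul_diagonal, trace_diagonal]
  simp [sq]

theorem IsHermitian.dotProduct_mulVec_le_s5 {A : Matrix n n ℝ} (hA : A.IsHermitian) {t : ℝ}
    (ht : ∀ i, hA.eigenvalues i ≤ t) (x : n → ℝ) : x ⬝ᵥ A *ᵥ x ≤ t * (x ⬝ᵥ x) := by
  set U : Matrix n n ℝ := ↑hA.eigenvectorUnitary
  have hU : star U = Uᵀ := conjTranspose_eq_transpose_of_trivial U
  set d := hA.eigenvalues
  have hA' : A = U * diagonal d * Uᵀ := by
    conv_lhs => rw [hA.spectral_theorem, Unitary.conjStarAlgAut_apply]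
    rw [hU]; rfl
  have hUUt : U * Uᵀ = 1 := by rw [← hU, Unitary.mul_star_self_of_mem hA.eigenvectorUnitary.2]
  set y := Uᵀ *ᵥ x
  have hquad : x ⬝ᵥ A *ᵥ x = y ⬝ᵥ diagonal d *ᵥ y := by
    rw [hA', dotProduct_mul_mul_transpose_mulVec]
  have hnorm : x ⬝ᵥ x = y ⬝ᵥ y := by
    simpa [hUUt] using dotProduct_mul_mul_transpose_mulVec U 1 x
  rw [hquad, hnorm]
  simp only [dotProduct, mulVec_diagonal, Finset.mul_sum]
  refine Finset.sum_le_sum fun i _ ↦ ?_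
  nlinarith [ht i, mul_self_nonneg (y i)]

end Matrix

theorem SimpleGraph.trace_adjMatrix_mul_self {V α : Type*} [Fintype V] (G : SimpleGraph V)
    [DecidableRel G.Adj] [NonAssocSemiring α] :
    (G.adjMatrix α * G.adjMatrix α).trace = G.adjMatrix α *ᵥ 1 ⬝ᵥ 1 := by
  rw [← G.natCast_card_dart_eq_dotProduct, G.dart_card_eq_sum_degrees]
  simp [trace, G.adjMatrix_mul_self_apply_self]

theorem energy_le_koolen_moulton (k : ℕ) (G : SimpleGraph (Fin k)) [DecidableRel G.Adj] :
    ∑ i, |(adj_isHermitian G).eigenvalues i| ≤ (1 / 2) * (1 + Real.sqrt k) * k := by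
  set hA := adj_isHermitian G
  rcases isEmpty_or_nonempty (Fin k) with _ | _
  · simp only [Finset.univ_eq_empty, Finset.sum_empty]
    positivity
  obtain ⟨i₀, hi₀⟩ := Finite.exists_max hA.eigenvalues
  have h : ∑ i, hA.eigenvalues i ^ 2 ≤ Fintype.card (Fin k) * hA.eigenvalues i₀ :=
    calc ∑ i, hA.eigenvalues i ^ 2 = 1 ⬝ᵥ G.adjMatrix ℝ *ᵥ 1 := by
          rw [dotProduct_comm, ← G.trace_adjMatrix_mul_self, hA.trace_mul_self]; rfl
      _ ≤ hA.eigenvalues i₀ * (1 ⬝ᵥ 1) := hA.dotProduct_mulVec_le_s5 hi₀ 1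
      _ = Fintype.card (Fin k) * hA.eigenvalues i₀ := by simp [mul_comm]
  simpa using sum_abs_le_of_sum_sq_le_card_mul _ i₀ h
end

section
/- If G is a graph with chromatic number χ ≥ 2 and order n, then the sum of the χ largest singular values of its adjacency matrix is at least 2μ₁(G), where μ₁(G) is the largest adjacency eigenvalue. -/
open Matrix BigOperators

/-!
Hoffman's argument. Let `x` be a unit eigenvector for the largest eigenvalue `μ₁` and split it
along a proper `χ`-colouring into its restrictions `x_c` to the colour classes. These are pairwise
orthogonal and `⟪x_c, A x_c⟫ = 0`, since colour classes are independent. So the quadratic form of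
`A` has trace zero on the span of the `x_c`, and completing `x` to an orthonormal basis of this
span gives `m < χ` orthonormal vectors orthogonal to `x` whose quadratic forms sum to `-μ₁`.
Expanding them in an eigenbasis of `A`, some `m` eigenvalues other than `μ₁` sum to at most `-μ₁`.
Hence `2μ₁` is at most a sum of `m + 1 ≤ χ` absolute eigenvalues, and for a symmetric matrix these
are singular values.
-/

open Finset
open scoped RealInnerProductSpace

theorem Finset.sum_le_sum_mul_of_forall_le_of_forall_ge {ι : Type*} [DecidableEq ι]
    {I S : Finset ι} (hSI : S ⊆ I) {f p : ι → ℝ} (hp0 : ∀ i ∈ I, 0 ≤ p i)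
    (hp1 : ∀ i ∈ I, p i ≤ 1) (hsum : ∑ i ∈ I, p i = #S) {t : ℝ} (hS : ∀ i ∈ S, f i ≤ t)
    (hIS : ∀ i ∈ I \ S, t ≤ f i) :
    ∑ i ∈ S, f i ≤ ∑ i ∈ I, f i * p i := by
  have hout : ∑ i ∈ I \ S, t * p i ≤ ∑ i ∈ I \ S, f i * p i :=
    sum_le_sum fun i hi => mul_le_mul_of_nonneg_right (hIS i hi) (hp0 i (sdiff_subset hi))
  have hin : ∑ i ∈ S, t * (p i - 1) ≤ ∑ i ∈ S, f i * (p i - 1) :=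
    sum_le_sum fun i hi => mul_le_mul_of_nonpos_right (hS i hi) (by linarith [hp1 i (hSI hi)])
  simp only [mul_sub, mul_one, sum_sub_distrib, ← mul_sum, sum_const, nsmul_eq_mul] at hin hout
  rw [← sum_sdiff hSI] at hsum ⊢
  linear_combination hout + hin - t * hsum

theorem Finset.exists_subset_card_eq_sum_le_sum_mul {ι : Type*} [DecidableEq ι] (I : Finset ι)
    (f p : ι → ℝ) {m : ℕ} (hp0 : ∀ i ∈ I, 0 ≤ p i) (hp1 : ∀ i ∈ I, p i ≤ 1)
    (hsum : ∑ i ∈ I, p i = m) :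
    ∃ S ⊆ I, #S = m ∧ ∑ i ∈ S, f i ≤ ∑ i ∈ I, f i * p i := by
  have hm : m ≤ #I := by
    have := sum_le_sum hp1
    rw [hsum, sum_const, nsmul_one] at this
    exact_mod_cast this
  obtain ⟨S, hS, hmin⟩ := exists_min_image (I.powersetCard m) (fun S => ∑ i ∈ S, f i)
    (powersetCard_nonempty.2 hm)
  obtain ⟨hSI, rfl⟩ := mem_powersetCard.1 hS
  refine ⟨S, hSI, rfl, ?_⟩
  have exchange : ∀ i ∈ S, ∀ j ∈ I \ S, f i ≤ f j := by
    intro i hi j hj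
    obtain ⟨hjI, hjS⟩ := mem_sdiff.1 hj
    have := hmin (insert j (S.erase i)) (mem_powersetCard.2
      ⟨insert_subset hjI ((erase_subset i S).trans hSI), by
        rw [card_insert_of_notMem (fun h => hjS (mem_of_mem_erase h)), card_erase_add_one hi]⟩)
    rw [sum_insert (fun h => hjS (mem_of_mem_erase h)), ← add_sum_erase S f hi] at this
    linarith
  rcases S.eq_empty_or_nonempty with rfl | hne
  · have hp : ∀ i ∈ I, p i = 0 := (sum_eq_zero_iff_of_nonneg hp0).1 (by simpa using hsum)
    simpa using (sum_eq_zero fun i hi => by rw [hp i hi, mul_zero] : ∑ i ∈ I, f i * p i = 0).ge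
  · obtain ⟨i₀, hi₀, hmax⟩ := exists_max_image S f hne
    exact sum_le_sum_mul_of_forall_le_of_forall_ge hSI hp0 hp1 hsum hmax
      fun j hj => exchange i₀ hi₀ j hj

section InnerProductSpace

variable {E : Type*} [NormedAddCommGroup E] [InnerProductSpace ℝ E]

theorem OrthonormalBasis.inner_map_self_eq_sum {ι : Type*} [Fintype ι]
    (b : OrthonormalBasis ι ℝ E) {T : E →ₗ[ℝ] E} {μ : ι → ℝ} (hb : ∀ i, T (b i) = μ i • b i)
    (z : E) : ⟪z, T z⟫ = ∑ i, μ i * ⟪b i, z⟫ ^ 2 := by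
  have hTz : T z = ∑ i, (μ i * ⟪b i, z⟫) • b i := by
    conv_lhs => rw [← b.sum_repr' z]
    simp only [map_sum, map_smul, hb, smul_smul, mul_comm]
  rw [hTz, inner_sum]
  refine sum_congr rfl fun i _ => ?_
  rw [real_inner_smul_right, real_inner_comm]
  ring

theorem OrthonormalBasis.exists_card_eq_sum_le_sum_inner_map_self {ι κ : Type*} [Fintype ι]
    [Fintype κ] [DecidableEq ι] (b : OrthonormalBasis ι ℝ E) {T : E →ₗ[ℝ] E} {μ : ι → ℝ}
    (hb : ∀ i, T (b i) = μ i • b i) {v : κ → E} (hv : Orthonormal ℝ v) (I : Finset ι)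
    (hI : ∀ i ∉ I, ∀ j, ⟪b i, v j⟫ = 0) :
    ∃ S ⊆ I, #S = Fintype.card κ ∧ ∑ i ∈ S, μ i ≤ ∑ j, ⟪v j, T (v j)⟫ := by
  set p : ι → ℝ := fun i => ∑ j, ⟪b i, v j⟫ ^ 2
  have hp0 (i : ι) : 0 ≤ p i := sum_nonneg fun j _ => sq_nonneg _
  have hp1 (i : ι) : p i ≤ 1 := by
    simpa [p, real_inner_comm, b.orthonormal.1 i] using hv.sum_inner_products_le (b i) (s := univ)
  have hp_out : ∀ i ∉ I, p i = 0 := fun i hi => by simp [p, hI i hi]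
  have hsum : ∑ i ∈ I, p i = Fintype.card κ := by
    rw [sum_subset (subset_univ I) fun i _ hi => hp_out i hi, sum_comm]
    simp [b.sum_sq_inner_right, hv.1]
  have hquad : ∑ j, ⟪v j, T (v j)⟫ = ∑ i ∈ I, μ i * p i := by
    rw [sum_subset (subset_univ I) fun i _ hi => by rw [hp_out i hi, mul_zero]]
    simp only [b.inner_map_self_eq_sum hb, p, mul_sum]
    exact sum_comm
  obtain ⟨S, hSI, hS, hle⟩ := I.exists_subset_card_eq_sum_le_sum_mul μ p (fun i _ => hp0 i)
    (fun i _ => hp1 i) hsum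
  exact ⟨S, hSI, hS, hquad ▸ hle⟩

theorem LinearMap.trace_adjoint_comp_comp_eq_sum_inner {F ι : Type*} [NormedAddCommGroup F]
    [InnerProductSpace ℝ F] [FiniteDimensional ℝ E] [FiniteDimensional ℝ F] [Fintype ι]
    (T : E →ₗ[ℝ] E) (L : F →ₗ[ℝ] E) (β : OrthonormalBasis ι ℝ F) :
    trace ℝ F (adjoint L ∘ₗ T ∘ₗ L) = ∑ j, ⟪L (β j), T (L (β j))⟫ := by
  simp [trace_eq_sum_inner _ β, adjoint_inner_right]

theorem OrthonormalBasis.exists_add_sum_le_zero_of_orthonormal {ι κ : Type*} [Fintype ι]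
    [Fintype κ] [DecidableEq ι] (b : OrthonormalBasis ι ℝ E) {T : E →ₗ[ℝ] E} {μ : ι → ℝ}
    (hb : ∀ i, T (b i) = μ i • b i) {w : κ → E} (hw : Orthonormal ℝ w)
    (hwT : ∀ c, ⟪w c, T (w c)⟫ = 0) {i₀ : ι} (γ : EuclideanSpace ℝ κ)
    (hγ : ∑ c, γ c • w c = b i₀) :
    ∃ S ⊆ univ.erase i₀, #S + 1 = Fintype.card κ ∧ μ i₀ + ∑ i ∈ S, μ i ≤ 0 := by
  classical
  have : FiniteDimensional ℝ E := b.toBasis.finiteDimensional_of_finite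
  let e := EuclideanSpace.basisFun κ ℝ
  have hconstr : e.toBasis.constr ℝ w ∘ e.toBasis = w := funext (e.toBasis.constr_basis ℝ w)
  -- `L` maps `EuclideanSpace ℝ κ` isometrically onto the span of `w`, and `γ` to `b i₀`. The sum
  -- of the quadratic forms of `T` along `L` over an orthonormal basis is a trace, so it vanishes
  -- for a basis `β` extending `γ` because it does for the standard basis.
  let L : EuclideanSpace ℝ κ →ₗᵢ[ℝ] E :=
    (e.toBasis.constr ℝ w).isometryOfOrthonormal (by simp) (hconstr ▸ hw)
  have hLe (c : κ) : L (e c) = w c := congrFun hconstr c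
  have hLγ : L γ = b i₀ := by
    conv_lhs => rw [← e.sum_repr γ]
    simp only [map_sum, map_smul, hLe]
    simpa [e] using hγ
  have hγ1 : ‖γ‖ = 1 := by rw [← L.norm_map, hLγ, b.orthonormal.1 i₀]
  obtain ⟨j₀, -⟩ : ∃ j, γ j ≠ 0 := by
    by_contra! h
    rw [show γ = 0 from PiLp.ext h, norm_zero] at hγ1
    exact zero_ne_one hγ1
  obtain ⟨β, hβ⟩ := Orthonormal.exists_orthonormalBasis_extension_of_card_eq
    (𝕜 := ℝ) (E := EuclideanSpace ℝ κ) (v := fun _ => γ) (s := {j₀}) finrank_euclideanSpace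
    ⟨fun _ => hγ1, fun i j hij => absurd (Subtype.ext (i.2.trans j.2.symm)) hij⟩
  have hβ₀ : β j₀ = γ := hβ j₀ rfl
  let v : ↥(univ.erase j₀) → E := fun j => L (β j)
  have hv : Orthonormal ℝ v := (β.orthonormal.comp_linearIsometry L).comp _ Subtype.val_injective
  have hI : ∀ i ∉ univ.erase i₀, ∀ j, ⟪b i, v j⟫ = 0 := by
    intro i hi j
    obtain rfl : i = i₀ := by simpa using hi
    rw [← hLγ, ← hβ₀, L.inner_map_map]
    exact β.orthonormal.2 (mem_erase.1 j.2).1.symm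
  obtain ⟨S, hS, hcard, hle⟩ := b.exists_card_eq_sum_le_sum_inner_map_self hb hv _ hI
  refine ⟨S, hS, ?_, ?_⟩
  · rw [hcard, Fintype.card_coe, card_erase_add_one (mem_univ j₀), card_univ]
  have htrace : ∑ j, ⟪L (β j), T (L (β j))⟫ = 0 :=
    calc ∑ j, ⟪L (β j), T (L (β j))⟫ = ∑ c, ⟪L (e c), T (L (e c))⟫ :=
          (LinearMap.trace_adjoint_comp_comp_eq_sum_inner T L.toLinearMap β).symm.trans
            (LinearMap.trace_adjoint_comp_comp_eq_sum_inner T L.toLinearMap e)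
      _ = 0 := by simp only [hLe, hwT, sum_const_zero]
  have hx : ⟪b i₀, T (b i₀)⟫ = μ i₀ := by
    rw [hb, real_inner_smul_right, real_inner_self_eq_norm_sq, b.orthonormal.1 i₀]
    simp
  rw [← add_sum_erase univ _ (mem_univ j₀), hβ₀, hLγ, hx] at htrace
  rw [sum_coe_sort (univ.erase j₀) fun j => ⟪L (β j), T (L (β j))⟫] at hle
  linarith

theorem OrthonormalBasis.exists_add_sum_le_zero_of_sum_eq {ι κ : Type*} [Fintype ι] [Fintype κ]
    [DecidableEq ι] (b : OrthonormalBasis ι ℝ E) {T : E →ₗ[ℝ] E} {μ : ι → ℝ}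
    (hb : ∀ i, T (b i) = μ i • b i) {y : κ → E} (hy : Pairwise fun c d => ⟪y c, y d⟫ = 0)
    (hyT : ∀ c, ⟪y c, T (y c)⟫ = 0) {i₀ : ι} (hy_sum : ∑ c, y c = b i₀) :
    ∃ S ⊆ univ.erase i₀, #S < Fintype.card κ ∧ μ i₀ + ∑ i ∈ S, μ i ≤ 0 := by
  classical
  let w : {c // y c ≠ 0} → E := fun c => ‖y c‖⁻¹ • y c
  have hw : Orthonormal ℝ w := by
    refine ⟨fun c => norm_smul_inv_norm c.2, fun c d hcd => ?_⟩
    simp only [w]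
    rw [real_inner_smul_left, real_inner_smul_right, hy fun h => hcd (Subtype.ext h)]
    ring
  have hwT (c : {c // y c ≠ 0}) : ⟪w c, T (w c)⟫ = 0 := by
    rw [map_smul, real_inner_smul_left, real_inner_smul_right, hyT]
    ring
  let γ : EuclideanSpace ℝ {c // y c ≠ 0} := WithLp.toLp 2 fun c => ‖y c‖
  have hγ : ∑ c, γ c • w c = b i₀ :=
    calc ∑ c, γ c • w c = ∑ c : {c // y c ≠ 0}, y c := sum_congr rfl fun c _ => by
          simp [γ, w, smul_smul, mul_inv_cancel₀ (norm_ne_zero_iff.2 c.2)]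
      _ = ∑ c with y c ≠ 0, y c := (sum_subtype _ (fun c => mem_filter_univ c) _).symm
      _ = b i₀ := by rw [sum_filter_ne_zero, hy_sum]
  obtain ⟨S, hS, hcard, hle⟩ := b.exists_add_sum_le_zero_of_orthonormal hb hw hwT _ hγ
  have := Fintype.card_subtype_le fun c => y c ≠ 0
  exact ⟨S, hS, by omega, hle⟩

end InnerProductSpace

theorem SimpleGraph.dotProduct_adjMatrix_mulVec_eq_zero {V : Type*} [Fintype V]
    (G : SimpleGraph V) [DecidableRel G.Adj] {s : Set V} (hs : G.IsIndepSet s) {z : V → ℝ}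
    (hz : ∀ v ∉ s, z v = 0) : z ⬝ᵥ (G.adjMatrix ℝ *ᵥ z) = 0 := by
  simp only [dotProduct, mulVec, mul_sum]
  refine sum_eq_zero fun v _ => sum_eq_zero fun u _ => ?_
  by_cases hvu : G.Adj v u
  · by_cases hv : v ∈ s
    · rw [hz u fun hu => hs hv hu (G.ne_of_adj hvu) hvu]
      ring
    · rw [hz v hv]
      ring
  · rw [adjMatrix_apply, if_neg hvu]
    ring

theorem SimpleGraph.exists_eigenvalue_add_sum_le_zero {V α : Type*} [Fintype V] [DecidableEq V]
    [Fintype α] (G : SimpleGraph V) [DecidableRel G.Adj] (C : G.Coloring α)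
    (hA : (G.adjMatrix ℝ).IsHermitian) (i₀ : V) :
    ∃ S ⊆ univ.erase i₀, #S < Fintype.card α ∧
      hA.eigenvalues i₀ + ∑ i ∈ S, hA.eigenvalues i ≤ 0 := by
  classical
  let y (c : α) : EuclideanSpace ℝ V :=
    WithLp.toLp 2 fun v => if C v = c then hA.eigenvectorBasis i₀ v else 0
  refine hA.eigenvectorBasis.exists_add_sum_le_zero_of_sum_eq (T := toEuclideanLin (G.adjMatrix ℝ))
    (fun i => ?_) (y := y) (fun c d hcd => ?_) (fun c => ?_) ?_
  · rw [toLpLin_apply, hA.mulVec_eigenvectorBasis]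
    rfl
  · simp only [y, EuclideanSpace.inner_toLp_toLp, dotProduct]
    refine sum_eq_zero fun v _ => ?_
    by_cases hc : C v = c <;> simp [hc, hcd]
  · rw [toLpLin_apply, EuclideanSpace.inner_toLp_toLp, dotProduct_comm]
    refine G.dotProduct_adjMatrix_mulVec_eq_zero (C.isIndepSet_colorClass c) fun v hv => ?_
    exact if_neg hv
  · ext v
    simp [y]

theorem Equiv.Perm.exists_comp_eq_of_map_univ_eq {ι β : Type*} [Fintype ι] {f g : ι → β}
    (h : univ.val.map f = univ.val.map g) : ∃ σ : Equiv.Perm ι, ∀ i, f (σ i) = g i := by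
  classical
  have fiber (b : β) : Nonempty ({ i // g i = b } ≃ { i // f i = b }) := by
    refine ⟨Fintype.equivOfCardEq ?_⟩
    have := congrArg (Multiset.count b) h
    simp only [Multiset.count_map, Fintype.card_subtype] at this ⊢
    convert this.symm using 2 <;> simp [Finset.filter, eq_comm]
  exact ⟨Equiv.ofFiberEquiv fun b => (fiber b).some, Equiv.ofFiberEquiv_map _⟩

theorem Matrix.IsHermitian.exists_perm_singularValues_eq_abs_eigenvalues {ι : Type*} [Fintype ι]
    [DecidableEq ι] {A : Matrix ι ι ℝ} (hA : A.IsHermitian) :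
    ∃ σ : Equiv.Perm ι, ∀ i, singularValues A (σ i) = |hA.eigenvalues i| := by
  have hAA := isHermitian_mul_conjTranspose_self A
  have hroots : (A * Aᴴ).charpoly.roots = univ.val.map fun i => hA.eigenvalues i ^ 2 := by
    rw [hA.eq, ← sq, ← cfc_pow_id (R := ℝ) A 2 hA.isSelfAdjoint, hA.charpoly_cfc_eq,
      Polynomial.roots_prod _ _ (prod_ne_zero_iff.2 fun i _ => Polynomial.X_sub_C_ne_zero _)]
    simp only [RCLike.ofReal_real_eq_id, id, Polynomial.roots_X_sub_C, Multiset.bind_singleton]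
  rw [hAA.roots_charpoly_eq_eigenvalues] at hroots
  obtain ⟨σ, hσ⟩ := Equiv.Perm.exists_comp_eq_of_map_univ_eq (f := hAA.eigenvalues)
    (g := fun i => hA.eigenvalues i ^ 2) (by simpa using hroots)
  exact ⟨σ, fun i => by rw [singularValues, hσ, Real.sqrt_sq_eq_abs]⟩

theorem sum_singularValues_le_kyFan {α β : Type*} [Fintype α] [Fintype β] [DecidableEq α]
    (A : Matrix α β ℝ) {k : ℕ} {s : Finset α} (hs : #s ≤ k) (hk : k ≤ Fintype.card α) :
    ∑ i ∈ s, singularValues A i ≤ kyFan k A := by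
  obtain ⟨t, hst, rfl⟩ := exists_superset_card_eq hs hk
  calc ∑ i ∈ s, singularValues A i ≤ ∑ i ∈ t, singularValues A i :=
        sum_le_sum_of_subset_of_nonneg hst fun i _ _ => Real.sqrt_nonneg _
    _ ≤ kyFan #t A := le_csSup ((Set.toFinite _).image _).bddAbove ⟨t, rfl, rfl⟩

theorem Matrix.IsHermitian.sum_abs_eigenvalues_le_kyFan {ι : Type*} [Fintype ι] [DecidableEq ι]
    {A : Matrix ι ι ℝ} (hA : A.IsHermitian) {k : ℕ} {s : Finset ι} (hs : #s ≤ k)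
    (hk : k ≤ Fintype.card ι) : ∑ i ∈ s, |hA.eigenvalues i| ≤ kyFan k A := by
  obtain ⟨σ, hσ⟩ := hA.exists_perm_singularValues_eq_abs_eigenvalues
  calc ∑ i ∈ s, |hA.eigenvalues i| = ∑ i ∈ s.map σ.toEmbedding, singularValues A i := by
        simp [hσ]
    _ ≤ kyFan k A := sum_singularValues_le_kyFan A (by simpa using hs) hk

theorem kyFan_chromatic_ge (n : ℕ) (G : SimpleGraph (Fin n)) [DecidableRel G.Adj]
    (χ : ℕ) (hχ : G.chromaticNumber = χ) (h2 : 2 ≤ χ) :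
    2 * (⨆ i, (adj_isHermitian G).eigenvalues i) ≤ kyFan χ (G.adjMatrix ℝ) := by
  set μ := (adj_isHermitian G).eigenvalues
  have hχn : χ ≤ n := by simpa [hχ] using G.chromaticNumber_le_card
  obtain ⟨C⟩ : G.Colorable χ := SimpleGraph.chromaticNumber_le_iff_colorable.1 hχ.le
  have : Nonempty (Fin n) := ⟨⟨0, by omega⟩⟩
  obtain ⟨i₀, -, hmax⟩ := exists_max_image univ μ univ_nonempty
  have hsup : ⨆ i, μ i = μ i₀ :=
    le_antisymm (ciSup_le fun i => hmax i (mem_univ i)) (le_ciSup (Set.finite_range μ).bddAbove i₀)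
  obtain ⟨S, hS, hcard, hle⟩ := G.exists_eigenvalue_add_sum_le_zero C (adj_isHermitian G) i₀
  have hi₀S : i₀ ∉ S := fun h => by simpa using hS h
  have hneg : μ i₀ ≤ ∑ i ∈ S, |μ i| := by
    have := sum_le_sum fun i (_ : i ∈ S) => neg_le_abs (μ i)
    rw [sum_neg_distrib] at this
    linarith
  calc 2 * (⨆ i, μ i) ≤ |μ i₀| + ∑ i ∈ S, |μ i| := by
        rw [hsup, two_mul]
        exact add_le_add (le_abs_self _) hneg
    _ = ∑ i ∈ insert i₀ S, |μ i| := by rw [sum_insert hi₀S]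
    _ ≤ kyFan χ (G.adjMatrix ℝ) :=
        Matrix.IsHermitian.sum_abs_eigenvalues_le_kyFan (adj_isHermitian G)
          (by rw [card_insert_of_notMem hi₀S]; simpa using hcard) (by simpa using hχn)
end
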